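/- Let f, g, h : ℝ^n × ℝ^n → ℂ be smooth and ℤ^{2n}-periodic. Then for every integer N ≥ 0, Σ_{a+b=N, a,b≥0} C_a(C_b(f,g), h) = Σ_{a+b=N, a,b≥0} C_a(f, C_b(g,h)). (This is the associativity, order by order in ℏ, of the star product f ⋆ g = Σ_j ℏ^j C_j(f,g).) -/

import Mathlib

open MeasureTheory Complex
open scoped Real

noncomputable section

/-- The unit box `[0,1]^n` in `ℝ^n`. -/
def box (n : ℕ) : Set (Fin n → ℝ) := Set.univ.pi fun _ => Set.Icc (0:ℝ) 1

/-- `ℤ^{2n}`-periodicity of a function `f(x,y)` on `ℝ^n × ℝ^n`. -/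
def IsPeriodic2 (n : ℕ) (f : (Fin n → ℝ) × (Fin n → ℝ) → ℂ) : Prop :=
  ∀ (x y : Fin n → ℝ) (a b : Fin n → ℤ),
    f (x + fun i => (a i : ℝ), y + fun i => (b i : ℝ)) = f (x, y)

/-- The `m`-th fibrewise Fourier coefficient
`f̂_m(y) = ∫_{[0,1]^n} f(x,y) e^{-2π√-1 m·x} dx`. -/
def fhat (n : ℕ) (f : (Fin n → ℝ) × (Fin n → ℝ) → ℂ) (m : Fin n → ℤ) (y : Fin n → ℝ) : ℂ :=
  ∫ x in box n, f (x, y) * Complex.exp (-2 * π * Complex.I * ∑ i, (m i : ℂ) * (x i : ℂ))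

/-- `N_m = ∏_{i : m_i ≠ 0} 1/(2π√-1 m_i)`. -/
def Nm (n : ℕ) (m : Fin n → ℤ) : ℂ :=
  ∏ i ∈ Finset.univ.filter (fun i => m i ≠ 0), (1 / (2 * π * Complex.I * (m i : ℂ)))
/-- Partial derivative `∂/∂x^i` of a function `f(x,y)` on `ℝ^n × ℝ^n`. -/
def pderivX (n : ℕ) (i : Fin n) (f : (Fin n → ℝ) × (Fin n → ℝ) → ℂ) :
    (Fin n → ℝ) × (Fin n → ℝ) → ℂ :=
  fun p => fderiv ℝ f p (Pi.single i (1:ℝ), 0)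

/-- Partial derivative `∂/∂y^i` of a function `f(x,y)` on `ℝ^n × ℝ^n`. -/
def pderivY (n : ℕ) (i : Fin n) (f : (Fin n → ℝ) × (Fin n → ℝ) → ℂ) :
    (Fin n → ℝ) × (Fin n → ℝ) → ℂ :=
  fun p => fderiv ℝ f p (0, Pi.single i (1:ℝ))

/-- Iterated `x`-derivative `∂^j/∂x^{i_1}⋯∂x^{i_j}` along a list of indices. -/
def derivX (n : ℕ) (l : List (Fin n)) (f : (Fin n → ℝ) × (Fin n → ℝ) → ℂ) :
    (Fin n → ℝ) × (Fin n → ℝ) → ℂ :=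
  l.foldr (pderivX n) f

/-- Iterated `y`-derivative `∂^j/∂y^{i_1}⋯∂y^{i_j}` along a list of indices. -/
def derivY (n : ℕ) (l : List (Fin n)) (f : (Fin n → ℝ) × (Fin n → ℝ) → ℂ) :
    (Fin n → ℝ) × (Fin n → ℝ) → ℂ :=
  l.foldr (pderivY n) f

/-- `C_j(f,g) = (1/(j!·(2π√-1)^j)) Σ_{i_1,…,i_j} (∂^j f/∂y^{i_1}⋯∂y^{i_j})
(∂^j g/∂x^{i_1}⋯∂x^{i_j})`. -/
def Cop (n j : ℕ) (f g : (Fin n → ℝ) × (Fin n → ℝ) → ℂ) :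
    (Fin n → ℝ) × (Fin n → ℝ) → ℂ :=
  fun p => (1 / ((Nat.factorial j : ℂ) * (2 * π * Complex.I) ^ j)) *
    ∑ v : Fin j → Fin n, derivY n (List.ofFn v) f p * derivX n (List.ofFn v) g p

/-- `Č_j(f,g) = ((√-1)^j/((2π)^j j!)) Σ_{i_1,…,i_j} (∂^j f/∂x^{i_1}⋯∂x^{i_j})
(∂^j g/∂y^{i_1}⋯∂y^{i_j})`. -/
def CopCheck (n j : ℕ) (f g : (Fin n → ℝ) × (Fin n → ℝ) → ℂ) :
    (Fin n → ℝ) × (Fin n → ℝ) → ℂ :=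
  fun p => (Complex.I ^ j / ((2 * (π : ℂ)) ^ j * (Nat.factorial j : ℂ))) *
    ∑ v : Fin j → Fin n, derivX n (List.ofFn v) f p * derivY n (List.ofFn v) g p

/-!
Write `C_j(f, g) = t^j / j! • ∑_v ∂₁^v f * ∂₂^v g` with `t = (2π√-1)⁻¹`, where `∂₁ = ∂/∂y`,
`∂₂ = ∂/∂x` and `v` runs over words of length `j`. Expanding the inner operator by the Leibniz rule,
and using only that partial derivatives commute, both `C_a(C_b(f, g), h)` and `C_a(f, C_b(g, h))`
become sums of trilinear terms `∂₁^(x ++ z) f * ∂₁^y ∂₂^z g * ∂₂^(x ++ y) h`. A word of length `a`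
splits into words of lengths `j + k = a` in `a.choose j` ways, and
`t^a / a! * a.choose j = t^j / j! * t^k / k!`, so every term carries the coefficient
`t^N / (|x|! |y|! |z|!)` on both sides; the two sides differ only by a cyclic relabelling of the
three lengths.
-/

open Finset
open scoped ContDiff

variable {E : Type*} [NormedAddCommGroup E] [NormedSpace ℝ E] {ι : Type*}

section DirectionalDerivative

def dirDeriv (v : E) (f : E → ℂ) : E → ℂ := fun p => fderiv ℝ f p v

theorem ContDiff.dirDeriv {f : E → ℂ} (hf : ContDiff ℝ ∞ f) (v : E) :
    ContDiff ℝ ∞ (dirDeriv v f) :=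
  (hf.fderiv_right (m := ∞) le_rfl).clm_apply contDiff_const

theorem dirDeriv_comm {f : E → ℂ} (hf : ContDiff ℝ 2 f) (u v : E) :
    dirDeriv u (dirDeriv v f) = dirDeriv v (dirDeriv u f) := by
  funext p
  have hd : DifferentiableAt ℝ (fderiv ℝ f) p :=
    (hf.fderiv_right (m := 1) le_rfl).differentiable one_ne_zero p
  have hflip : ∀ w : E, fderiv ℝ (fun q => fderiv ℝ f q w) p = (fderiv ℝ (fderiv ℝ f) p).flip w :=
    fun w => by simpa using fderiv_clm_apply hd (differentiableAt_const w)
  change fderiv ℝ (fun q => fderiv ℝ f q v) p u = fderiv ℝ (fun q => fderiv ℝ f q u) p v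
  rw [hflip, hflip]
  exact (hf.contDiffAt.isSymmSndFDerivAt (by simp)).eq u v

theorem dirDeriv_mul {φ ψ : E → ℂ} (hφ : Differentiable ℝ φ) (hψ : Differentiable ℝ ψ) (v : E) :
    dirDeriv v (φ * ψ) = dirDeriv v φ * ψ + φ * dirDeriv v ψ := by
  funext p
  simp only [dirDeriv, fderiv_mul (hφ p) (hψ p), Pi.add_apply, Pi.mul_apply,
    FunLike.coe_add, FunLike.coe_smul, Pi.smul_apply, smul_eq_mul]
  ring

theorem dirDeriv_sum {κ : Type*} (s : Finset κ) {F : κ → E → ℂ}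
    (hF : ∀ i ∈ s, Differentiable ℝ (F i)) (v : E) :
    dirDeriv v (∑ i ∈ s, F i) = ∑ i ∈ s, dirDeriv v (F i) := by
  funext p
  simp [dirDeriv, fderiv_sum (fun i hi => hF i hi p)]

theorem dirDeriv_const_smul (c : ℂ) (f : E → ℂ) (v : E) :
    dirDeriv v (c • f) = c • dirDeriv v f := by
  funext p
  simp [dirDeriv, fderiv_const_smul_field]

end DirectionalDerivative

section IteratedDirectionalDerivative

def iterDirDeriv (d : ι → E) (l : List ι) (f : E → ℂ) : E → ℂ :=
  l.foldr (fun i => dirDeriv (d i)) f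

variable (d : ι → E)

@[simp] theorem iterDirDeriv_nil (f : E → ℂ) : iterDirDeriv d [] f = f := rfl

@[simp] theorem iterDirDeriv_cons (i : ι) (l : List ι) (f : E → ℂ) :
    iterDirDeriv d (i :: l) f = dirDeriv (d i) (iterDirDeriv d l f) := rfl

theorem iterDirDeriv_append (l l' : List ι) (f : E → ℂ) :
    iterDirDeriv d (l ++ l') f = iterDirDeriv d l (iterDirDeriv d l' f) := by
  simp [iterDirDeriv, List.foldr_append]

variable {d} {d' : ι → E}

theorem ContDiff.iterDirDeriv {f : E → ℂ} (hf : ContDiff ℝ ∞ f) (l : List ι) :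
    ContDiff ℝ ∞ (iterDirDeriv d l f) := by
  induction l with
  | nil => exact hf
  | cons i l ih => exact ih.dirDeriv _

theorem iterDirDeriv_dirDeriv_comm {f : E → ℂ} (hf : ContDiff ℝ ∞ f) (l : List ι) (v : E) :
    iterDirDeriv d l (dirDeriv v f) = dirDeriv v (iterDirDeriv d l f) := by
  induction l with
  | nil => rfl
  | cons i l ih =>
    rw [iterDirDeriv_cons, iterDirDeriv_cons, ih,
      dirDeriv_comm (contDiff_infty.1 (hf.iterDirDeriv l) 2)]

theorem iterDirDeriv_comm {f : E → ℂ} (hf : ContDiff ℝ ∞ f) (l l' : List ι) :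
    iterDirDeriv d l (iterDirDeriv d' l' f) = iterDirDeriv d' l' (iterDirDeriv d l f) := by
  induction l with
  | nil => rfl
  | cons i l ih => rw [iterDirDeriv_cons, ih, iterDirDeriv_cons,
      iterDirDeriv_dirDeriv_comm (hf.iterDirDeriv l)]

theorem iterDirDeriv_perm {f : E → ℂ} (hf : ContDiff ℝ ∞ f) {l l' : List ι} (hp : l.Perm l') :
    iterDirDeriv d l f = iterDirDeriv d l' f := by
  induction hp with
  | nil => rfl
  | cons i _ ih => rw [iterDirDeriv_cons, iterDirDeriv_cons, ih]
  | swap i j l =>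
    simp only [iterDirDeriv_cons]
    exact dirDeriv_comm (contDiff_infty.1 (hf.iterDirDeriv l) 2) _ _
  | trans _ _ ih₁ ih₂ => rw [ih₁, ih₂]

theorem iterDirDeriv_sum {κ : Type*} (s : Finset κ) {F : κ → E → ℂ}
    (hF : ∀ i ∈ s, ContDiff ℝ ∞ (F i)) (l : List ι) :
    iterDirDeriv d l (∑ i ∈ s, F i) = ∑ i ∈ s, iterDirDeriv d l (F i) := by
  induction l with
  | nil => rfl
  | cons j l ih =>
    rw [iterDirDeriv_cons, ih]
    exact dirDeriv_sum s (fun i hi => ((hF i hi).iterDirDeriv l).differentiable (by simp)) _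

theorem iterDirDeriv_const_smul (c : ℂ) (f : E → ℂ) (l : List ι) :
    iterDirDeriv d l (c • f) = c • iterDirDeriv d l f := by
  induction l with
  | nil => rfl
  | cons j l ih => rw [iterDirDeriv_cons, ih, dirDeriv_const_smul]; rfl

end IteratedDirectionalDerivative

section Subsequences

def subseq {a : ℕ} (v : Fin a → ι) (s : Fin a → Bool) (b : Bool) : List ι :=
  ((List.finRange a).filter (fun i => s i == b)).map v

@[simp] theorem subseq_zero (v : Fin 0 → ι) (s : Fin 0 → Bool) (b : Bool) : subseq v s b = [] :=
  rfl

@[simp] theorem subseq_cons {a : ℕ} (i : ι) (v : Fin a → ι) (c : Bool) (s : Fin a → Bool)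
    (b : Bool) :
    subseq (Fin.cons i v : Fin (a + 1) → ι) (Fin.cons c s) b
      = if c = b then i :: subseq v s b else subseq v s b := by
  by_cases h : c = b <;>
    simp [subseq, h, List.finRange_succ, List.filter_map, Function.comp_def]

theorem subseq_append_perm {a : ℕ} (v : Fin a → ι) (s : Fin a → Bool) :
    (subseq v s true ++ subseq v s false).Perm (List.ofFn v) := by
  have hfalse : (fun i => s i == false) = fun i => !(s i == true) := by
    funext i; cases s i <;> rfl
  rw [List.ofFn_eq_map, subseq, subseq, ← List.map_append, hfalse]
  exact (List.filter_append_perm _ _).map v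

variable [Fintype ι] {M : Type*} [AddCommMonoid M]

theorem Fintype.sum_fin_succ_pi {a : ℕ} (G : (Fin (a + 1) → ι) → M) :
    ∑ v, G v = ∑ i, ∑ v : Fin a → ι, G (Fin.cons i v) := by
  rw [← Fintype.sum_prod_type']
  exact (Fintype.sum_equiv (Fin.consEquiv fun _ => ι) _ _ fun _ => rfl).symm

theorem sum_ofFn_succ (G : List ι → M) (a : ℕ) :
    ∑ u : Fin (a + 1) → ι, G (List.ofFn u) = ∑ i, ∑ u : Fin a → ι, G (i :: List.ofFn u) := by
  simp [Fintype.sum_fin_succ_pi]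

theorem sum_sum_subseq (a : ℕ) (F : List ι → List ι → M) :
    ∑ v : Fin a → ι, ∑ s : Fin a → Bool, F (subseq v s true) (subseq v s false)
      = ∑ jk ∈ antidiagonal a, a.choose jk.1 •
          ∑ u : Fin jk.1 → ι, ∑ w : Fin jk.2 → ι, F (List.ofFn u) (List.ofFn w) := by
  induction a generalizing F with
  | zero => simp
  | succ a ih =>
    set T : ℕ → ℕ → M := fun j k =>
      ∑ u : Fin j → ι, ∑ w : Fin k → ι, F (List.ofFn u) (List.ofFn w)
    have hT : ∀ j k, ∑ i, ∑ u : Fin j → ι, ∑ w : Fin k → ι,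
        (F (i :: List.ofFn u) (List.ofFn w) + F (List.ofFn u) (i :: List.ofFn w))
          = T (j + 1) k + T j (k + 1) := by
      intro j k
      simp only [T, sum_ofFn_succ, sum_add_distrib]
      rw [sum_ofFn_succ fun x => ∑ w : Fin k → ι, F x (List.ofFn w)]
      congr 1
      exact sum_comm
    calc _ = ∑ i, ∑ v : Fin a → ι, ∑ s : Fin a → Bool,
          (F (i :: subseq v s true) (subseq v s false)
            + F (subseq v s true) (i :: subseq v s false)) := by
          simp [Fintype.sum_fin_succ_pi, sum_add_distrib]
      _ = ∑ jk ∈ antidiagonal a, a.choose jk.1 • (T (jk.1 + 1) jk.2 + T jk.1 (jk.2 + 1)) := by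
          rw [sum_congr rfl fun i _ => ih fun x y => F (i :: x) y + F x (i :: y), sum_comm]
          simp only [← hT, smul_sum]
      _ = _ := by
          change _ = ∑ jk ∈ antidiagonal (a + 1), (a + 1).choose jk.1 • T jk.1 jk.2
          rw [sum_antidiagonal_choose_succ_nsmul, add_comm]
          simp only [smul_add, sum_add_distrib]
          congr 1
          refine sum_congr rfl fun jk hjk => ?_
          rw [Nat.choose_symm_of_eq_add (mem_antidiagonal.1 hjk).symm]

end Subsequences

theorem sum_antidiagonal_sum_antidiagonal_rotate {M : Type*} [AddCommMonoid M] (N : ℕ)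
    (G : ℕ → ℕ → ℕ → M) :
    ∑ ab ∈ antidiagonal N, ∑ jk ∈ antidiagonal ab.1, G jk.1 jk.2 ab.2
      = ∑ ab ∈ antidiagonal N, ∑ jk ∈ antidiagonal ab.1, G jk.2 ab.2 jk.1 := by
  rw [sum_sigma', sum_sigma']
  refine sum_nbij' (fun x => ⟨(x.1.2 + x.2.1, x.2.2), (x.1.2, x.2.1)⟩)
    (fun y => ⟨(y.2.2 + y.1.2, y.2.1), (y.2.2, y.1.2)⟩) ?_ ?_ ?_ ?_ fun _ _ => rfl
  all_goals
    rintro ⟨⟨a, b⟩, ⟨j, k⟩⟩ h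
    simp_all <;> omega

section Leibniz

variable {d d' : ι → E}

theorem iterDirDeriv_mul {φ ψ : E → ℂ} (hφ : ContDiff ℝ ∞ φ) (hψ : ContDiff ℝ ∞ ψ) {a : ℕ}
    (v : Fin a → ι) :
    iterDirDeriv d (List.ofFn v) (φ * ψ)
      = ∑ s : Fin a → Bool,
          iterDirDeriv d (subseq v s true) φ * iterDirDeriv d (subseq v s false) ψ := by
  induction a with
  | zero => simp
  | succ a ih =>
    obtain ⟨i, w, rfl⟩ : ∃ i w, v = Fin.cons i w := ⟨v 0, Fin.tail v, (Fin.cons_self_tail v).symm⟩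
    have hφ' (l : List ι) : Differentiable ℝ (iterDirDeriv d l φ) :=
      (hφ.iterDirDeriv l).differentiable (by simp)
    have hψ' (l : List ι) : Differentiable ℝ (iterDirDeriv d l ψ) :=
      (hψ.iterDirDeriv l).differentiable (by simp)
    rw [List.ofFn_cons, iterDirDeriv_cons, ih w,
      dirDeriv_sum _ fun s _ => (hφ' _).mul (hψ' _), Fintype.sum_fin_succ_pi,
      Fintype.sum_bool, ← sum_add_distrib]
    refine sum_congr rfl fun s _ => ?_
    rw [dirDeriv_mul (hφ' _) (hψ' _)]
    simp

theorem sum_iterDirDeriv_mul_mul [Fintype ι] {φ ψ χ : E → ℂ} (hφ : ContDiff ℝ ∞ φ)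
    (hψ : ContDiff ℝ ∞ ψ) (hχ : ContDiff ℝ ∞ χ) (a : ℕ) (p : E) :
    ∑ v : Fin a → ι, iterDirDeriv d (List.ofFn v) (φ * ψ) p * iterDirDeriv d' (List.ofFn v) χ p
      = ∑ jk ∈ antidiagonal a, (a.choose jk.1 : ℂ) * ∑ u : Fin jk.1 → ι, ∑ w : Fin jk.2 → ι,
          iterDirDeriv d (List.ofFn u) φ p * iterDirDeriv d (List.ofFn w) ψ p *
            iterDirDeriv d' (List.ofFn u ++ List.ofFn w) χ p := by
  rw [← sum_congr rfl fun jk _ => nsmul_eq_mul _ _, ← sum_sum_subseq a fun x y =>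
    iterDirDeriv d x φ p * iterDirDeriv d y ψ p * iterDirDeriv d' (x ++ y) χ p]
  refine sum_congr rfl fun v _ => ?_
  rw [iterDirDeriv_mul hφ hψ, Finset.sum_apply, sum_mul]
  refine sum_congr rfl fun s _ => ?_
  rw [iterDirDeriv_perm hχ (subseq_append_perm v s).symm]
  rfl

end Leibniz

section BidifferentialOperator

open Nat

def expCoeff (t : ℂ) (j : ℕ) : ℂ := t ^ j / j !

theorem expCoeff_add_mul_choose (t : ℂ) (j k : ℕ) :
    expCoeff t (j + k) * (j + k).choose j = expCoeff t j * expCoeff t k := by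
  have hfac : ((j + k).choose j : ℂ) * j ! * k ! = (j + k)! := by
    exact_mod_cast choose_symm_add ▸ add_choose_mul_factorial_mul_factorial j k
  have hchoose : ((j + k).choose j : ℂ) ≠ 0 := by exact_mod_cast (choose_pos (by omega)).ne'
  rw [expCoeff, expCoeff, expCoeff, ← hfac]
  field_simp
  ring

variable [Fintype ι] (d₁ d₂ : ι → E) (t : ℂ)

def bidiffOp (j : ℕ) (f g : E → ℂ) : E → ℂ :=
  expCoeff t j • ∑ v : Fin j → ι, iterDirDeriv d₁ (List.ofFn v) f * iterDirDeriv d₂ (List.ofFn v) g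

theorem bidiffOp_apply (j : ℕ) (f g : E → ℂ) (p : E) :
    bidiffOp d₁ d₂ t j f g p = expCoeff t j *
      ∑ v : Fin j → ι, iterDirDeriv d₁ (List.ofFn v) f p * iterDirDeriv d₂ (List.ofFn v) g p := by
  simp [bidiffOp, Finset.sum_apply]

-- `x` records the derivatives pairing `f` with `h`, `y` those pairing `g` with `h`, and `z`
-- those pairing `f` with `g`.
def tripleSum (f g h : E → ℂ) (p : E) (j k b : ℕ) : ℂ :=
  expCoeff t j * expCoeff t k * expCoeff t b *
    ∑ x : Fin j → ι, ∑ y : Fin k → ι, ∑ z : Fin b → ι,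
      iterDirDeriv d₁ (List.ofFn x ++ List.ofFn z) f p *
        iterDirDeriv d₁ (List.ofFn y) (iterDirDeriv d₂ (List.ofFn z) g) p *
          iterDirDeriv d₂ (List.ofFn x ++ List.ofFn y) h p

variable {d₁ d₂ t} {f g h : E → ℂ}

theorem iterDirDeriv_bidiffOp (d : ι → E) (hf : ContDiff ℝ ∞ f) (hg : ContDiff ℝ ∞ g) (j : ℕ)
    (l : List ι) :
    iterDirDeriv d l (bidiffOp d₁ d₂ t j f g) = expCoeff t j • ∑ v : Fin j → ι,
      iterDirDeriv d l (iterDirDeriv d₁ (List.ofFn v) f * iterDirDeriv d₂ (List.ofFn v) g) := by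
  rw [bidiffOp, iterDirDeriv_const_smul, iterDirDeriv_sum _
    (F := fun v => iterDirDeriv d₁ (List.ofFn v) f * iterDirDeriv d₂ (List.ofFn v) g)
    fun v _ => (hf.iterDirDeriv _).mul (hg.iterDirDeriv _)]

theorem bidiffOp_bidiffOp_left (hf : ContDiff ℝ ∞ f) (hg : ContDiff ℝ ∞ g) (hh : ContDiff ℝ ∞ h)
    (a b : ℕ) (p : E) :
    bidiffOp d₁ d₂ t a (bidiffOp d₁ d₂ t b f g) h p
      = ∑ jk ∈ antidiagonal a, tripleSum d₁ d₂ t f g h p jk.1 jk.2 b := by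
  simp only [bidiffOp_apply, iterDirDeriv_bidiffOp d₁ hf hg, Pi.smul_apply, Finset.sum_apply,
    smul_eq_mul]
  calc _ = expCoeff t a * expCoeff t b * ∑ z : Fin b → ι, ∑ v : Fin a → ι,
        iterDirDeriv d₁ (List.ofFn v)
          (iterDirDeriv d₁ (List.ofFn z) f * iterDirDeriv d₂ (List.ofFn z) g) p *
            iterDirDeriv d₂ (List.ofFn v) h p := by
        simp only [mul_sum, sum_mul, mul_assoc]
        exact sum_comm
    _ = _ := by
        simp only [sum_iterDirDeriv_mul_mul (hf.iterDirDeriv _) (hg.iterDirDeriv _) hh]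
        rw [sum_comm, mul_sum]
        refine sum_congr rfl fun jk hjk => ?_
        obtain ⟨j, k⟩ := jk
        obtain rfl : j + k = a := mem_antidiagonal.1 hjk
        rw [← mul_sum, tripleSum, ← expCoeff_add_mul_choose t j k, sum_comm]
        simp only [iterDirDeriv_append]
        rw [sum_congr rfl fun x _ => sum_comm]
        ring

theorem bidiffOp_bidiffOp_right (hf : ContDiff ℝ ∞ f) (hg : ContDiff ℝ ∞ g) (hh : ContDiff ℝ ∞ h)
    (a b : ℕ) (p : E) :
    bidiffOp d₁ d₂ t a f (bidiffOp d₁ d₂ t b g h) p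
      = ∑ jk ∈ antidiagonal a, tripleSum d₁ d₂ t f g h p jk.2 b jk.1 := by
  simp only [bidiffOp_apply, iterDirDeriv_bidiffOp d₂ hg hh, Pi.smul_apply, Finset.sum_apply,
    smul_eq_mul]
  calc _ = expCoeff t a * expCoeff t b * ∑ y : Fin b → ι, ∑ v : Fin a → ι,
        iterDirDeriv d₂ (List.ofFn v)
          (iterDirDeriv d₁ (List.ofFn y) g * iterDirDeriv d₂ (List.ofFn y) h) p *
            iterDirDeriv d₁ (List.ofFn v) f p := by
        simp only [mul_sum]
        rw [sum_comm]
        exact sum_congr rfl fun y _ => sum_congr rfl fun v _ => by ring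
    _ = _ := by
        simp only [sum_iterDirDeriv_mul_mul (hg.iterDirDeriv _) (hh.iterDirDeriv _) hf]
        rw [sum_comm, mul_sum]
        refine sum_congr rfl fun jk hjk => ?_
        obtain ⟨j, k⟩ := jk
        obtain rfl : j + k = a := mem_antidiagonal.1 hjk
        rw [← mul_sum, tripleSum, ← mul_assoc, sum_congr rfl fun y _ => sum_comm, sum_comm]
        simp only [iterDirDeriv_append, iterDirDeriv_comm (d := d₂) (d' := d₁) hg,
          iterDirDeriv_perm hf (List.perm_append_comm (l₁ := List.ofFn _) (l₂ := List.ofFn _))]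
        congr 1
        · rw [mul_right_comm, expCoeff_add_mul_choose]
          ring
        · exact sum_congr rfl fun x _ => sum_congr rfl fun y _ => sum_congr rfl fun z _ => by ring

theorem sum_bidiffOp_bidiffOp_assoc (hf : ContDiff ℝ ∞ f) (hg : ContDiff ℝ ∞ g)
    (hh : ContDiff ℝ ∞ h) (N : ℕ) (p : E) :
    ∑ ab ∈ antidiagonal N, bidiffOp d₁ d₂ t ab.1 (bidiffOp d₁ d₂ t ab.2 f g) h p
      = ∑ ab ∈ antidiagonal N, bidiffOp d₁ d₂ t ab.1 f (bidiffOp d₁ d₂ t ab.2 g h) p := by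
  simp only [bidiffOp_bidiffOp_left hf hg hh, bidiffOp_bidiffOp_right hf hg hh]
  exact sum_antidiagonal_sum_antidiagonal_rotate N (tripleSum d₁ d₂ t f g h p)

end BidifferentialOperator

theorem Cop_eq_bidiffOp (n j : ℕ) (f g : (Fin n → ℝ) × (Fin n → ℝ) → ℂ) :
    Cop n j f g = bidiffOp (fun i => (0, Pi.single i 1)) (fun i => (Pi.single i 1, 0))
      (2 * π * I)⁻¹ j f g := by
  funext p
  rw [bidiffOp_apply, Cop, expCoeff, one_div, mul_inv, inv_pow, div_eq_mul_inv,
    mul_comm ((2 * π * I : ℂ) ^ j)⁻¹]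
  rfl

theorem statement13_general (n : ℕ) (f g h : (Fin n → ℝ) × (Fin n → ℝ) → ℂ)
    (hf : ContDiff ℝ (⊤ : ℕ∞) f) (hg : ContDiff ℝ (⊤ : ℕ∞) g)
    (hh : ContDiff ℝ (⊤ : ℕ∞) h) :
    ∀ (N : ℕ) (p : (Fin n → ℝ) × (Fin n → ℝ)),
      (∑ ab ∈ Finset.HasAntidiagonal.antidiagonal N, Cop n ab.1 (Cop n ab.2 f g) h p) =
        (∑ ab ∈ Finset.HasAntidiagonal.antidiagonal N, Cop n ab.1 f (Cop n ab.2 g h) p) := by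
  intro N p
  simp only [Cop_eq_bidiffOp]
  exact sum_bidiffOp_bidiffOp_assoc hf hg hh N p

/-- Order-by-order associativity of the star product `f ⋆ g = Σ_j ℏ^j C_j(f,g)`:
for smooth `ℤ^{2n}`-periodic `f, g, h` and every `N ≥ 0`,
`Σ_{a+b=N} C_a(C_b(f,g),h) = Σ_{a+b=N} C_a(f,C_b(g,h))`. -/
theorem statement13 (n : ℕ) (hn : 1 ≤ n) (f g h : (Fin n → ℝ) × (Fin n → ℝ) → ℂ)
    (hf : ContDiff ℝ (⊤ : ℕ∞) f) (hg : ContDiff ℝ (⊤ : ℕ∞) g)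
    (hh : ContDiff ℝ (⊤ : ℕ∞) h)
    (hperf : IsPeriodic2 n f) (hperg : IsPeriodic2 n g) (hperh : IsPeriodic2 n h) :
    ∀ (N : ℕ) (p : (Fin n → ℝ) × (Fin n → ℝ)),
      (∑ ab ∈ Finset.HasAntidiagonal.antidiagonal N, Cop n ab.1 (Cop n ab.2 f g) h p) =
        (∑ ab ∈ Finset.HasAntidiagonal.antidiagonal N, Cop n ab.1 f (Cop n ab.2 g h) p) :=
  statement13_general n f g h hf hg hh
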